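/- The kernel of φ is free abelian of rank 3: there is a group isomorphism from ker φ to ℤ³ sending x₀ = b·a, x₁ = a·b, and x₂ = b⁻¹·a·b² to the three standard basis vectors of ℤ³. -/

import Mathlib

/-- The generator `a` of the free group on two generators. -/
def fa : FreeGroup (Fin 2) := FreeGroup.of 0
/-- The generator `b` of the free group on two generators. -/
def fb : FreeGroup (Fin 2) := FreeGroup.of 1

/-- The two relators `(b·a²)·(a³·b²)⁻¹` and `(b²·a)·(a²·b³)⁻¹`. -/
def csRels : Set (FreeGroup (Fin 2)) :=
  {(fb * fa ^ 2) * (fa ^ 3 * fb ^ 2)⁻¹, (fb ^ 2 * fa) * (fa ^ 2 * fb ^ 3)⁻¹}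

/-- The group `G = ⟨a, b ∣ b·a² = a³·b², b²·a = a²·b³⟩`. -/
abbrev G : Type := PresentedGroup csRels

/-- The image of `a` in `G`. -/
def ga : G := PresentedGroup.of 0
/-- The image of `b` in `G`. -/
def gb : G := PresentedGroup.of 1

/-!
With `xᵢ = b^(1-i) a b^i` we have `b⁻¹ xᵢ b = xᵢ₊₁`, and the two relations give that
`x₀` and `x₁` commute and that `x₋₁ = x₁ x₂`. Conjugating by powers of `b`, the elements
`x₀, x₁, x₂` commute pairwise and `b` acts on them by `x₀ ↦ x₁ x₂, x₁ ↦ x₀, x₂ ↦ x₁`.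
This gives a homomorphism `ℤ³ ⋊ ℤ → G`, inverse to the map `a ↦ (e₁, -1), b ↦ (0, 1)`.
Under this isomorphism `φ` becomes the projection onto `ℤ`, whose kernel is `ℤ³`.
-/

open Multiplicative SemidirectProduct

section
variable {ι M : Type*} [Group M]

lemma Pairwise.commute_zpowersHom {x : ι → M} (hx : Pairwise fun i j => Commute (x i) (x j)) :
    Pairwise fun i j => ∀ m n, Commute (zpowersHom M (x i) m) (zpowersHom M (x j) n) :=
  fun _ _ hij _ _ => (hx hij).zpow_zpow _ _

def zpowersPiHom [Fintype ι] (x : ι → M) (hx : Pairwise fun i j => Commute (x i) (x j)) :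
    Multiplicative (ι → ℤ) →* M :=
  (MonoidHom.noncommPiCoprod (fun i => zpowersHom M (x i)) hx.commute_zpowersHom).comp
    (MulEquiv.funMultiplicative ι ℤ).toMonoidHom

lemma MulEquiv.funMultiplicative_ofAdd_single [DecidableEq ι] (i : ι) :
    MulEquiv.funMultiplicative ι ℤ (ofAdd (Pi.single i 1)) = Pi.mulSingle i (ofAdd 1) := by
  funext j
  by_cases hj : j = i
  · subst hj; simp
  · simp [hj]

lemma zpowersPiHom_ofAdd_single [Fintype ι] [DecidableEq ι] (x : ι → M)
    (hx : Pairwise fun i j => Commute (x i) (x j)) (i : ι) :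
    zpowersPiHom x hx (ofAdd (Pi.single i 1)) = x i := by
  rw [zpowersPiHom, MonoidHom.comp_apply, MulEquiv.coe_toMonoidHom,
    MulEquiv.funMultiplicative_ofAdd_single, MonoidHom.noncommPiCoprod_mulSingle, zpowersHom_apply,
    toAdd_ofAdd, zpow_one]

lemma MonoidHom.ext_ofAdd_single [Finite ι] [DecidableEq ι] {f g : Multiplicative (ι → ℤ) →* M}
    (h : ∀ i, f (ofAdd (Pi.single i 1)) = g (ofAdd (Pi.single i 1))) : f = g := by
  set e := (MulEquiv.funMultiplicative ι ℤ).symm.toMonoidHom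
  have : f.comp e = g.comp e := MonoidHom.pi_ext fun i => by
    let single := MonoidHom.mulSingle (fun _ => Multiplicative ℤ) i
    refine DFunLike.congr_fun (MonoidHom.ext_mint (f := (f.comp e).comp single)
      (g := (g.comp e).comp single) ?_)
    simpa [e, single, ← MulEquiv.funMultiplicative_ofAdd_single] using h i
  refine MonoidHom.ext fun n => ?_
  simpa only [e, MonoidHom.comp_apply, MulEquiv.coe_toMonoidHom, MulEquiv.symm_apply_apply]
    using DFunLike.congr_fun this (MulEquiv.funMultiplicative ι ℤ n)

end

lemma MonoidHom.map_zpow_apply_of_map_apply {A B : Type*} [Group A] [Group B] (f : A →* B)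
    {σ : MulAut A} {τ : MulAut B} (h : ∀ a, f (σ a) = τ (f a)) (n : ℤ) (a : A) :
    f ((σ ^ n) a) = (τ ^ n) (f a) := by
  induction n using Int.induction_on generalizing a with
  | zero => rfl
  | succ k ih => rw [zpow_add_one, zpow_add_one, MulAut.mul_apply, MulAut.mul_apply, ih, h]
  | pred k ih =>
    have h' : f (σ⁻¹ a) = τ⁻¹ (f a) := by
      rw [MulAut.inv_apply, MulAut.inv_apply, MulEquiv.eq_symm_apply, ← h,
        MulEquiv.apply_symm_apply]
    rw [zpow_sub_one, zpow_sub_one, MulAut.mul_apply, MulAut.mul_apply, ih, h']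

def SemidirectProduct.kerRightHomCompEquiv {G N Q : Type*} [Group G] [Group N] [Group Q]
    {ϕ : Q →* MulAut N} (e : G ≃* N ⋊[ϕ] Q) :
    (rightHom.comp e.toMonoidHom).ker ≃* N where
  toFun k := (e k).left
  invFun n := ⟨e.symm (inl n), by simp⟩
  left_inv k := Subtype.ext <| e.symm_apply_eq.2 <| by
    have hk : (e k).right = 1 := k.2
    ext <;> simp [hk]
  right_inv n := by simp
  map_mul' k l := by
    have hk : (e k).right = 1 := k.2
    simp only [Subgroup.coe_mul, map_mul, mul_left, hk, map_one, MulAut.one_apply]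

lemma gb_mul_ga_sq : gb * ga ^ 2 = ga ^ 3 * gb ^ 2 := by
  have h := PresentedGroup.mk_eq_mk_of_mul_inv_mem (rels := csRels) (Or.inl rfl)
  simp only [map_mul, map_pow] at h
  exact h

lemma gb_sq_mul_ga : gb ^ 2 * ga = ga ^ 2 * gb ^ 3 := by
  have h := PresentedGroup.mk_eq_mk_of_mul_inv_mem (rels := csRels) (Or.inr rfl)
  simp only [map_mul, map_pow] at h
  exact h

def gx (i : ℤ) : G := gb ^ (1 - i) * ga * gb ^ i

lemma gx_zero : gx 0 = gb * ga := by simp [gx]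
lemma gx_one : gx 1 = ga * gb := by simp [gx]
lemma gx_two : gx 2 = gb⁻¹ * ga * gb ^ 2 := by simp only [gx]; group

lemma gx_neg_one : gx (-1) = gx 1 * gx 2 := mul_right_cancel (b := gb⁻¹) <| calc
  gx (-1) * gb⁻¹ = gb ^ 2 * ga * gb⁻¹ ^ 2 := by simp only [gx]; group
  _ = ga ^ 2 * gb ^ 3 * gb⁻¹ ^ 2 := by rw [gb_sq_mul_ga]
  _ = gx 1 * gx 2 * gb⁻¹ := by simp only [gx, sq]; group

lemma commute_gx_zero_gx_one : Commute (gx 0) (gx 1) := calc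
  gx 0 * gx 1 = gb * ga ^ 2 * gb := by rw [gx_zero, gx_one]; simp only [sq, mul_assoc]
  _ = ga ^ 3 * gb ^ 3 := by rw [gb_mul_ga_sq, pow_succ gb 2, mul_assoc]
  _ = ga * (ga ^ 2 * gb ^ 3) := by rw [pow_succ' ga 2, mul_assoc]
  _ = ga * (gb ^ 2 * ga) := by rw [gb_sq_mul_ga]
  _ = gx 1 * gx 0 := by rw [gx_zero, gx_one]; simp only [sq, mul_assoc]

lemma conj_gb_gx_add_one (i : ℤ) : MulAut.conj gb (gx (i + 1)) = gx i := by
  rw [MulAut.conj_apply, gx, gx]; group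

lemma conj_gb_inv_gx (i : ℤ) : MulAut.conj gb⁻¹ (gx i) = gx (i + 1) := by
  rw [← conj_gb_gx_add_one, ← MulAut.mul_apply, ← map_mul, inv_mul_cancel, map_one,
    MulAut.one_apply]

lemma Commute.gx_add_one {i j : ℤ} (h : Commute (gx i) (gx j)) :
    Commute (gx (i + 1)) (gx (j + 1)) := by
  simpa only [conj_gb_inv_gx] using h.map (MulAut.conj gb⁻¹)

lemma pairwise_commute_gx :
    Pairwise fun i j : Fin 3 => Commute (![gx 0, gx 1, gx 2] i) (![gx 0, gx 1, gx 2] j) := by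
  have h01 := commute_gx_zero_gx_one
  have h12 : Commute (gx 1) (gx 2) := h01.gx_add_one
  have h02 : Commute (gx 0) (gx 2) := by
    have h : Commute (gx (-1)) (gx 1) := by
      rw [gx_neg_one]
      exact (Commute.refl _).mul_left h12.symm
    simpa using h.gx_add_one
  intro i j hij
  fin_cases i <;> fin_cases j <;> simp_all [Commute.symm]

-- Conjugation by `b` in the coordinates of `x₀, x₁, x₂`.
def bAddAut : (Fin 3 → ℤ) ≃+ (Fin 3 → ℤ) where
  toFun n := ![n 1, n 0 + n 2, n 0]
  invFun n := ![n 2, n 0, n 1 - n 2]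
  left_inv n := by ext i; fin_cases i <;> simp
  right_inv n := by ext i; fin_cases i <;> simp
  map_add' m n := by ext i; fin_cases i <;> simp [add_add_add_comm]

abbrev K : Type := Multiplicative (Fin 3 → ℤ)

def bAut : MulAut K := AddEquiv.toMultiplicative bAddAut

abbrev H : Type := K ⋊[zpowersHom _ bAut] Multiplicative ℤ

lemma bAut_single_zero :
    bAut (ofAdd (Pi.single 0 1)) = ofAdd (Pi.single 1 1) * ofAdd (Pi.single 2 1) := by decide
lemma bAut_single_one : bAut (ofAdd (Pi.single 1 1)) = ofAdd (Pi.single 0 1) := by decide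
lemma bAut_single_two : bAut (ofAdd (Pi.single 2 1)) = ofAdd (Pi.single 1 1) := by decide
lemma bAut_inv_single_one : bAut⁻¹ (ofAdd (Pi.single 1 1)) = ofAdd (Pi.single 2 1) := by decide

def aH : H := inl (ofAdd (Pi.single 1 1)) * inr (ofAdd (-1))
def bH : H := inr (ofAdd 1)

lemma bH_mul_aH_sq : bH * aH ^ 2 = aH ^ 3 * bH ^ 2 := by
  refine SemidirectProduct.ext ?_ ?_ <;> decide

lemma bH_sq_mul_aH : bH ^ 2 * aH = aH ^ 2 * bH ^ 3 := by
  refine SemidirectProduct.ext ?_ ?_ <;> decide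

def toH : G →* H :=
  PresentedGroup.toGroup (f := ![aH, bH]) <| by
    rintro r (rfl | rfl) <;>
      simp only [fa, fb, map_mul, map_inv, map_pow, FreeGroup.lift_apply_of, mul_inv_eq_one,
        Matrix.cons_val_zero, Matrix.cons_val_one]
    exacts [bH_mul_aH_sq, bH_sq_mul_aH]

lemma toH_ga : toH ga = aH := PresentedGroup.toGroup.of _
lemma toH_gb : toH gb = bH := PresentedGroup.toGroup.of _

lemma inr_ofAdd_eq_bH_zpow (k : ℤ) : (inr (ofAdd k) : H) = bH ^ k := by
  rw [bH, ← map_zpow, ← ofAdd_zsmul, smul_eq_mul, mul_one]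

lemma toH_gx (i : ℤ) : toH (gx i) = inl ((bAut ^ (1 - i)) (ofAdd (Pi.single 1 1))) := by
  have hconj := inl_aut (φ := zpowersHom _ bAut) (ofAdd (1 - i)) (ofAdd (Pi.single 1 1))
  rw [zpowersHom_apply, toAdd_ofAdd] at hconj
  rw [hconj, gx, map_mul, map_mul, map_zpow, map_zpow, toH_ga, toH_gb, aH, map_inv,
    inr_ofAdd_eq_bH_zpow, inr_ofAdd_eq_bH_zpow]
  group

lemma toH_gx_zero : toH (gx 0) = inl (ofAdd (Pi.single 0 1)) := by
  rw [toH_gx, sub_zero, zpow_one, bAut_single_one]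

lemma toH_gx_one : toH (gx 1) = inl (ofAdd (Pi.single 1 1)) := by
  rw [toH_gx, sub_self, zpow_zero, MulAut.one_apply]

lemma toH_gx_two : toH (gx 2) = inl (ofAdd (Pi.single 2 1)) := by
  rw [toH_gx, show (1 : ℤ) - 2 = -1 by norm_num, zpow_neg_one, bAut_inv_single_one]

abbrev xHom : K →* G := zpowersPiHom ![gx 0, gx 1, gx 2] pairwise_commute_gx

lemma xHom_bAut (n : K) : xHom (bAut n) = MulAut.conj gb (xHom n) := by
  have h : xHom.comp bAut.toMonoidHom = (MulAut.conj gb).toMonoidHom.comp xHom := by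
    refine MonoidHom.ext_ofAdd_single fun i => ?_
    simp only [MonoidHom.comp_apply, MulEquiv.coe_toMonoidHom, zpowersPiHom_ofAdd_single]
    fin_cases i
    · simp [bAut_single_zero, zpowersPiHom_ofAdd_single, ← gx_neg_one,
        ← conj_gb_gx_add_one (-1)]
    · simp [bAut_single_one, zpowersPiHom_ofAdd_single, ← conj_gb_gx_add_one 0]
    · simp [bAut_single_two, zpowersPiHom_ofAdd_single, ← conj_gb_gx_add_one 1]
  exact DFunLike.congr_fun h n

def ofH : H →* G :=
  lift xHom (zpowersHom G gb) fun q => MonoidHom.ext fun n => by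
    simpa [map_zpow] using xHom.map_zpow_apply_of_map_apply xHom_bAut (toAdd q) n

lemma ofH_comp_toH : ofH.comp toH = MonoidHom.id G := by
  refine PresentedGroup.ext fun i => ?_
  fin_cases i
  · show ofH (toH ga) = ga
    rw [toH_ga, aH, map_mul, ofH, lift_inl, lift_inr, zpowersPiHom_ofAdd_single]
    simp [gx_one]
  · show ofH (toH gb) = gb
    rw [toH_gb, bH, ofH, lift_inr]
    simp

lemma toH_comp_ofH : toH.comp ofH = MonoidHom.id H := by
  refine SemidirectProduct.hom_ext (MonoidHom.ext_ofAdd_single fun i => ?_)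
    (MonoidHom.ext_mint ?_)
  · simp only [MonoidHom.comp_apply, ofH, lift_inl, zpowersPiHom_ofAdd_single, MonoidHom.id_apply]
    fin_cases i
    · exact toH_gx_zero
    · exact toH_gx_one
    · exact toH_gx_two
  · simp [ofH, toH_gb, bH]

def gEquivH : G ≃* H := MonoidHom.toMulEquiv toH ofH ofH_comp_toH toH_comp_ofH

/-- For the (unique) homomorphism `φ : G → ℤ` with `φ(a) = −1` and `φ(b) = 1`, the kernel
of `φ` is free abelian of rank 3: there is an isomorphism `ker φ ≅ ℤ³` sending
`x₀ = b·a`, `x₁ = a·b` and `x₂ = b⁻¹·a·b²` to the three standard basis vectors. -/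
theorem ker_free_abelian_rank_three
    (φ : G →* Multiplicative ℤ)
    (ha : φ ga = Multiplicative.ofAdd (-1))
    (hb : φ gb = Multiplicative.ofAdd 1) :
    ∃ ψ : φ.ker ≃* Multiplicative (Fin 3 → ℤ),
      ∀ (h0 : gb * ga ∈ φ.ker) (h1 : ga * gb ∈ φ.ker)
        (h2 : gb⁻¹ * ga * gb ^ 2 ∈ φ.ker),
        ψ ⟨gb * ga, h0⟩ = Multiplicative.ofAdd (Pi.single 0 1) ∧
        ψ ⟨ga * gb, h1⟩ = Multiplicative.ofAdd (Pi.single 1 1) ∧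
        ψ ⟨gb⁻¹ * ga * gb ^ 2, h2⟩ = Multiplicative.ofAdd (Pi.single 2 1) := by
  have hφ : φ = rightHom.comp gEquivH.toMonoidHom := by
    refine PresentedGroup.ext fun i => ?_
    fin_cases i
    · show φ ga = rightHom (toH ga)
      rw [ha, toH_ga, aH, map_mul, rightHom_inl, rightHom_inr, one_mul]
    · show φ gb = rightHom (toH gb)
      rw [hb, toH_gb, bH, rightHom_inr]
  subst hφ
  refine ⟨kerRightHomCompEquiv gEquivH, fun _ _ _ => ⟨?_, ?_, ?_⟩⟩
  · show (toH (gb * ga)).left = _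
    rw [← gx_zero, toH_gx_zero, left_inl]
  · show (toH (ga * gb)).left = _
    rw [← gx_one, toH_gx_one, left_inl]
  · show (toH (gb⁻¹ * ga * gb ^ 2)).left = _
    rw [← gx_two, toH_gx_two, left_inl]
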